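/- arXiv:2511.08794 — 3 statements merged into one kernel-verified Lean document; each statement's English description precedes it below -/
import Mathlib

section
/- Let n ≥ 1, let I ⊆ ℝ be an open interval, and let C, D : I → Matrix ℂ^{n×n} be continuous with C(s), D(s) symmetric for all s. Suppose H : I → Matrix ℂ^{n×n} solves the Riccati equation H' + H C H + D = 0 with symmetric initial value H(s₀) = H₀. Then H(s) is symmetric for every s ∈ I. -/
/-!
Put `K = H - Hᵀ`. Since `C` and `D` are symmetric, `Hᵀ` satisfies the same Riccati equation as
`H`, and subtracting the two equations gives the *linear* equation
`K' = -(K (C H) + (Hᵀ C) K)`. Its coefficients are continuous, hence bounded on compact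
subintervals, so its right-hand side is Lipschitz in `K` there; `K(s₀) = 0` and uniqueness of
solutions (Grönwall) give `K = 0`.
-/

open Matrix Set

theorem lipschitzWith_neg_mul_add_mul {R : Type*} [SeminormedRing R] (A B : R) :
    LipschitzWith (‖A‖₊ + ‖B‖₊) fun X : R => -(X * A + B * X) := by
  refine LipschitzWith.of_dist_le_mul fun X Y => ?_
  have hdiff : -(X * A + B * X) - -(Y * A + B * Y) = -((X - Y) * A + B * (X - Y)) := by
    noncomm_ring
  rw [dist_eq_norm, dist_eq_norm, hdiff, norm_neg]
  calc _ ≤ ‖X - Y‖ * ‖A‖ + ‖B‖ * ‖X - Y‖ :=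
        (norm_add_le _ _).trans (add_le_add (norm_mul_le _ _) (norm_mul_le _ _))
    _ = _ := by push_cast; ring

theorem exists_Icc_subset_Ioo_mem_Ioo {a b x y : ℝ} (hx : x ∈ Ioo a b) (hy : y ∈ Ioo a b) :
    ∃ a' b', Icc a' b' ⊆ Ioo a b ∧ x ∈ Ioo a' b' ∧ y ∈ Ioo a' b' := by
  refine ⟨(a + min x y) / 2, (max x y + b) / 2, fun t ht => ?_, ?_, ?_⟩ <;>
    simp only [mem_Ioo, mem_Icc] at * <;> constructor <;>
    linarith [min_le_left x y, min_le_right x y, le_max_left x y, le_max_right x y,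
      lt_min hx.1 hy.1, max_lt hx.2 hy.2]

section LinearODE

variable {E : Type*} [NormedRing E] [NormedSpace ℝ E]

theorem eqOn_zero_of_hasDerivAt_neg_mul_add_mul {A B K : ℝ → E} {a b t₀ : ℝ}
    (hA : ContinuousOn A (Icc a b)) (hB : ContinuousOn B (Icc a b))
    (hK : ContinuousOn K (Icc a b))
    (hK' : ∀ t ∈ Ioo a b, HasDerivAt K (-(K t * A t + B t * K t)) t)
    (ht₀ : t₀ ∈ Ioo a b) (hKt₀ : K t₀ = 0) : EqOn K 0 (Icc a b) := by
  obtain ⟨M, hM⟩ := isCompact_Icc.exists_bound_of_continuousOn (hA.norm.add hB.norm)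
  have hlip : ∀ t ∈ Ioo a b,
      LipschitzOnWith M.toNNReal (fun X => -(X * A t + B t * X)) univ := fun t ht =>
    ((lipschitzWith_neg_mul_add_mul _ _).weaken <| NNReal.le_toNNReal_of_coe_le <|
      (Real.le_norm_self _).trans (hM t (Ioo_subset_Icc_self ht))).lipschitzOnWith
  exact ODE_solution_unique_of_mem_Icc hlip ht₀ hK hK' (fun _ _ => trivial) continuousOn_const
    (fun _ _ => by simp) (fun _ _ => trivial) hKt₀

theorem eqOn_zero_of_hasDerivAt_neg_mul_add_mul_Ioo {A B K : ℝ → E} {a b t₀ : ℝ}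
    (hA : ContinuousOn A (Ioo a b)) (hB : ContinuousOn B (Ioo a b))
    (hK' : ∀ t ∈ Ioo a b, HasDerivAt K (-(K t * A t + B t * K t)) t)
    (ht₀ : t₀ ∈ Ioo a b) (hKt₀ : K t₀ = 0) : EqOn K 0 (Ioo a b) := fun t ht => by
  obtain ⟨a', b', hsub, ht₀', ht'⟩ := exists_Icc_subset_Ioo_mem_Ioo ht₀ ht
  exact eqOn_zero_of_hasDerivAt_neg_mul_add_mul (hA.mono hsub) (hB.mono hsub)
    (HasDerivAt.continuousOn fun s hs => hK' s (hsub hs))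
    (fun s hs => hK' s (hsub (Ioo_subset_Icc_self hs))) ht₀' hKt₀ (Ioo_subset_Icc_self ht')

end LinearODE

-- Any submultiplicative norm will do: `HasDerivAt` and continuity only see the product topology,
-- so the entrywise lemmas `hasDerivAt_pi` and `continuousOn_pi` still apply.
attribute [local instance] Matrix.linftyOpNormedRing Matrix.linftyOpNormedAlgebra

theorem HasDerivAt.matrix_transpose {m : Type*} [Fintype m]
    {H : ℝ → Matrix m m ℂ} {H' : Matrix m m ℂ} {s : ℝ} (h : HasDerivAt H H' s) :
    HasDerivAt (fun t => (H t)ᵀ) H'ᵀ s :=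
  hasDerivAt_pi.2 fun i => hasDerivAt_pi.2 fun j => hasDerivAt_pi.1 (hasDerivAt_pi.1 h j) i

theorem hasDerivAt_sub_transpose_of_riccati {m : Type*} [Fintype m] [DecidableEq m]
    {C D H : ℝ → Matrix m m ℂ} {s : ℝ}
    (hC : (C s)ᵀ = C s) (hD : (D s)ᵀ = D s)
    (hH : HasDerivAt H (-(H s * C s * H s + D s)) s) :
    HasDerivAt (fun t => H t - (H t)ᵀ)
      (-((H s - (H s)ᵀ) * (C s * H s) + (H s)ᵀ * C s * (H s - (H s)ᵀ))) s := by
  refine (hH.sub hH.matrix_transpose).congr_deriv ?_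
  simp only [transpose_neg, transpose_add, transpose_mul, hC, hD]
  noncomm_ring

theorem stmt4_general (n : ℕ) (a b : ℝ) (I : Set ℝ) (hI : I = Set.Ioo a b)
    (C D H : ℝ → Matrix (Fin n) (Fin n) ℂ)
    (hCcont : ∀ i j, ContinuousOn (fun s => C s i j) I)
    (hCsymm : ∀ s ∈ I, (C s)ᵀ = C s) (hDsymm : ∀ s ∈ I, (D s)ᵀ = D s)
    (hODE : ∀ s ∈ I, ∀ i j,
      HasDerivAt (fun t => H t i j) ((-(H s * C s * H s + D s)) i j) s)
    (s₀ : ℝ) (hs₀ : s₀ ∈ I) (hH₀ : (H s₀)ᵀ = H s₀) :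
    ∀ s ∈ I, (H s)ᵀ = H s := by
  subst hI
  have hH : ∀ s ∈ Ioo a b, HasDerivAt H (-(H s * C s * H s + D s)) s := fun s hs =>
    hasDerivAt_pi.2 fun i => hasDerivAt_pi.2 (hODE s hs i)
  have hHcont : ContinuousOn H (Ioo a b) := HasDerivAt.continuousOn hH
  have hCcont' : ContinuousOn C (Ioo a b) :=
    continuousOn_pi.2 fun i => continuousOn_pi.2 (hCcont i)
  have hHtcont : ContinuousOn (fun t => (H t)ᵀ) (Ioo a b) :=
    continuous_id.matrix_transpose.comp_continuousOn hHcont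
  intro s hs
  have hK : H s - (H s)ᵀ = 0 :=
    eqOn_zero_of_hasDerivAt_neg_mul_add_mul_Ioo (hCcont'.mul hHcont) (hHtcont.mul hCcont')
      (fun t ht => hasDerivAt_sub_transpose_of_riccati (hCsymm t ht) (hDsymm t ht) (hH t ht))
      hs₀ (by rw [hH₀, sub_self]) hs
  exact (sub_eq_zero.1 hK).symm

/-- solutions of the matrix Riccati equation H' + HCH + D = 0 with
symmetric C, D and symmetric initial value stay symmetric. -/
theorem stmt4 (n : ℕ) (hn : 1 ≤ n) (a b : ℝ) (I : Set ℝ) (hI : I = Set.Ioo a b)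
    (C D H : ℝ → Matrix (Fin n) (Fin n) ℂ)
    (hCcont : ∀ i j, ContinuousOn (fun s => C s i j) I)
    (hDcont : ∀ i j, ContinuousOn (fun s => D s i j) I)
    (hCsymm : ∀ s ∈ I, (C s)ᵀ = C s) (hDsymm : ∀ s ∈ I, (D s)ᵀ = D s)
    (hODE : ∀ s ∈ I, ∀ i j,
      HasDerivAt (fun t => H t i j) ((-(H s * C s * H s + D s)) i j) s)
    (s₀ : ℝ) (hs₀ : s₀ ∈ I) (hH₀ : (H s₀)ᵀ = H s₀) :
    ∀ s ∈ I, (H s)ᵀ = H s :=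
  stmt4_general n a b I hI C D H hCcont hCsymm hDsymm hODE s₀ hs₀ hH₀
end

section
/- Let φ₁, φ₂ : ℝⁿ → ℂ be continuous functions with Im φ₁ ≥ c|y|² and Im φ₂ ≥ c|y|² for some c > 0, and suppose |φ₁(y) - φ₂(y)| ≤ C|y|^{N+1} for all y in a neighborhood U of 0. Then for all ρ ≥ 1 and y ∈ U, |e^{iρφ₁(y)} - e^{iρφ₂(y)}| ≤ Cρ|y|^{N+1} e^{-cρ|y|²}. -/
/-!
The half-plane `{z | z.re ≤ M}` is convex and `‖exp'‖ = ‖exp‖ ≤ e^M` on it, so the mean value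
inequality makes `exp` `e^M`-Lipschitz there. Both `iρφ₁(y)` and `iρφ₂(y)` lie in this half-plane
for `M = -cρ|y|²`, and `|iρφ₁(y) - iρφ₂(y)| ≤ Cρ|y|^{N+1}`.
-/

open Complex

theorem Complex.norm_exp_sub_exp_le_of_re_le {z w : ℂ} {M : ℝ} (hz : z.re ≤ M) (hw : w.re ≤ M) :
    ‖exp z - exp w‖ ≤ Real.exp M * ‖z - w‖ :=
  (convex_halfSpace_re_le M).norm_image_sub_le_of_norm_hasDerivWithin_le
    (fun x _ => (hasDerivAt_exp x).hasDerivWithinAt)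
    (fun x hx => by rw [norm_exp]; exact Real.exp_le_exp.mpr hx) hw hz

theorem Complex.re_I_mul_ofReal_mul (ρ : ℝ) (φ : ℂ) : (I * ρ * φ).re = -(ρ * φ.im) := by
  simp [mul_re, mul_im]

theorem Complex.norm_exp_I_mul_sub_exp_I_mul_le {ρ a : ℝ} (hρ : 0 ≤ ρ) {φ₁ φ₂ : ℂ}
    (h₁ : a ≤ φ₁.im) (h₂ : a ≤ φ₂.im) :
    ‖exp (I * ρ * φ₁) - exp (I * ρ * φ₂)‖ ≤ ρ * ‖φ₁ - φ₂‖ * Real.exp (-a * ρ) := by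
  have hre : ∀ φ : ℂ, a ≤ φ.im → (I * ρ * φ).re ≤ -a * ρ := fun φ hφ => by
    rw [re_I_mul_ofReal_mul]; nlinarith
  calc ‖exp (I * ρ * φ₁) - exp (I * ρ * φ₂)‖
      ≤ Real.exp (-a * ρ) * ‖I * ρ * φ₁ - I * ρ * φ₂‖ :=
        norm_exp_sub_exp_le_of_re_le (hre _ h₁) (hre _ h₂)
    _ = ρ * ‖φ₁ - φ₂‖ * Real.exp (-a * ρ) := by
        rw [← mul_sub, norm_mul, norm_mul, norm_I, norm_real, Real.norm_of_nonneg hρ]; ring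

theorem stmt10_general (n N : ℕ) (c C : ℝ)
    (φ₁ φ₂ : EuclideanSpace ℝ (Fin n) → ℂ)
    (him1 : ∀ y, c * ‖y‖ ^ 2 ≤ (φ₁ y).im) (him2 : ∀ y, c * ‖y‖ ^ 2 ≤ (φ₂ y).im)
    (U : Set (EuclideanSpace ℝ (Fin n)))
    (hdiff : ∀ y ∈ U, ‖φ₁ y - φ₂ y‖ ≤ C * ‖y‖ ^ (N + 1)) :
    ∀ ρ : ℝ, 1 ≤ ρ → ∀ y ∈ U,
      ‖Complex.exp (Complex.I * ρ * φ₁ y) - Complex.exp (Complex.I * ρ * φ₂ y)‖ ≤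
        C * ρ * ‖y‖ ^ (N + 1) * Real.exp (-c * ρ * ‖y‖ ^ 2) := by
  intro ρ hρ y hy
  have hρ₀ : 0 ≤ ρ := zero_le_one.trans hρ
  calc _ ≤ ρ * ‖φ₁ y - φ₂ y‖ * Real.exp (-(c * ‖y‖ ^ 2) * ρ) :=
        norm_exp_I_mul_sub_exp_I_mul_le hρ₀ (him1 y) (him2 y)
    _ ≤ ρ * (C * ‖y‖ ^ (N + 1)) * Real.exp (-(c * ‖y‖ ^ 2) * ρ) := by gcongr; exact hdiff y hy
    _ = C * ρ * ‖y‖ ^ (N + 1) * Real.exp (-c * ρ * ‖y‖ ^ 2) := by ring_nf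

/-- difference of two Gaussian beam phases:
|e^{iρφ₁} - e^{iρφ₂}| ≤ Cρ|y|^{N+1} e^{-cρ|y|²} near 0. -/
theorem stmt10 (n N : ℕ) (c C : ℝ) (hc : 0 < c) (hC : 0 < C)
    (φ₁ φ₂ : EuclideanSpace ℝ (Fin n) → ℂ)
    (h1 : Continuous φ₁) (h2 : Continuous φ₂)
    (him1 : ∀ y, c * ‖y‖ ^ 2 ≤ (φ₁ y).im) (him2 : ∀ y, c * ‖y‖ ^ 2 ≤ (φ₂ y).im)
    (U : Set (EuclideanSpace ℝ (Fin n))) (hU : U ∈ nhds (0 : EuclideanSpace ℝ (Fin n)))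
    (hdiff : ∀ y ∈ U, ‖φ₁ y - φ₂ y‖ ≤ C * ‖y‖ ^ (N + 1)) :
    ∀ ρ : ℝ, 1 ≤ ρ → ∀ y ∈ U,
      ‖Complex.exp (Complex.I * ρ * φ₁ y) - Complex.exp (Complex.I * ρ * φ₂ y)‖ ≤
        C * ρ * ‖y‖ ^ (N + 1) * Real.exp (-c * ρ * ‖y‖ ^ 2) :=
  stmt10_general n N c C φ₁ φ₂ him1 him2 U hdiff
end

section
/- Let S : ℝⁿ → ℂ be continuous with Im S(y) ≥ c|y|² for some c > 0, and let a : ℝⁿ → ℂ be continuous, compactly supported, with a(0) = 0 and |a(y)| ≤ L|y| near 0. Then ρ^{n/2} ∫_{ℝⁿ} e^{iρS(y)} a(y) dy → 0 as ρ → ∞. -/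
/-! Substituting `y = ρ^{-1/2} x` absorbs the factor `ρ^{n/2}` and turns the integral into
`∫ exp(iρ S(ρ^{-1/2} x)) a(ρ^{-1/2} x) dx`. Since `ρ Im S(ρ^{-1/2} x) ≥ c‖x‖²`, the integrand is
dominated by the Gaussian `(sup ‖a‖) e^{-c‖x‖²}`, and it tends pointwise to `0` because
`a(ρ^{-1/2} x) → a 0 = 0`; dominated convergence concludes. -/

open MeasureTheory Filter Topology Module Complex

lemma norm_cexp_I_mul_ofReal_mul (ρ : ℝ) (z : ℂ) :
    ‖cexp (I * ρ * z)‖ = Real.exp (-(ρ * z.im)) := by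
  rw [Complex.norm_exp]
  congr 1
  simp [Complex.mul_re, Complex.mul_im]

lemma norm_cexp_I_mul_ofReal_mul_le_one {ρ : ℝ} (hρ : 0 ≤ ρ) {z : ℂ} (hz : 0 ≤ z.im) :
    ‖cexp (I * ρ * z)‖ ≤ 1 := by
  rw [norm_cexp_I_mul_ofReal_mul, Real.exp_le_one_iff, neg_nonpos]
  exact mul_nonneg hρ hz

lemma norm_cexp_I_mul_comp_inv_sqrt_smul_le {V : Type*} [NormedAddCommGroup V] [NormedSpace ℝ V]
    {c : ℝ} {S : V → ℂ} (him : ∀ y, c * ‖y‖ ^ 2 ≤ (S y).im) {ρ : ℝ} (hρ : 0 < ρ) (x : V) :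
    ‖cexp (I * ρ * S ((√ρ)⁻¹ • x))‖ ≤ Real.exp (-c * ‖x‖ ^ 2) := by
  rw [norm_cexp_I_mul_ofReal_mul, Real.exp_le_exp, neg_mul, neg_le_neg_iff]
  have hscale : ρ * ‖(√ρ)⁻¹ • x‖ ^ 2 = ‖x‖ ^ 2 := by
    rw [norm_smul, mul_pow, norm_inv, Real.norm_of_nonneg (Real.sqrt_nonneg ρ), inv_pow,
      Real.sq_sqrt hρ.le, ← mul_assoc, mul_inv_cancel₀ hρ.ne', one_mul]
  calc c * ‖x‖ ^ 2 = ρ * (c * ‖(√ρ)⁻¹ • x‖ ^ 2) := by rw [← hscale]; ring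
    _ ≤ ρ * (S ((√ρ)⁻¹ • x)).im := mul_le_mul_of_nonneg_left (him _) hρ.le

variable {V : Type*} [NormedAddCommGroup V] [InnerProductSpace ℝ V] [FiniteDimensional ℝ V]
  [MeasurableSpace V] [BorelSpace V]

lemma integrable_exp_neg_mul_norm_sq {c : ℝ} (hc : 0 < c) :
    Integrable (fun x : V ↦ Real.exp (-c * ‖x‖ ^ 2)) := by
  have h := (GaussianFourier.integrable_cexp_neg_mul_sq_norm_add (V := V)
    (b := (c : ℂ)) (by simpa using hc) 0 0).norm
  refine h.congr (Eventually.of_forall fun x ↦ ?_)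
  simp only [zero_mul, add_zero, Complex.norm_exp]
  norm_cast

lemma integral_comp_inv_sqrt_smul {ρ : ℝ} (hρ : 0 < ρ) (f : V → ℂ) :
    ∫ x, f ((√ρ)⁻¹ • x) = ((ρ ^ ((finrank ℝ V : ℝ) / 2) : ℝ) : ℂ) * ∫ y, f y := by
  rw [Measure.integral_comp_inv_smul_of_nonneg volume f (Real.sqrt_nonneg ρ), Complex.real_smul,
    Real.sqrt_eq_rpow, ← Real.rpow_natCast, ← Real.rpow_mul hρ.le, one_div_mul_eq_div]

lemma tendsto_integral_cexp_mul_comp_inv_sqrt_smul {c M : ℝ} (hc : 0 < c) {S a : V → ℂ}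
    (hS : Continuous S) (him : ∀ y, c * ‖y‖ ^ 2 ≤ (S y).im) (ha : Continuous a)
    (hM : ∀ y, ‖a y‖ ≤ M) (ha0 : a 0 = 0) :
    Tendsto (fun ρ : ℝ ↦ ∫ x, cexp (I * ρ * S ((√ρ)⁻¹ • x)) * a ((√ρ)⁻¹ • x))
      atTop (𝓝 0) := by
  have hshrink (x : V) : Tendsto (fun ρ : ℝ ↦ (√ρ)⁻¹ • x) atTop (𝓝 0) := by
    simpa using (tendsto_inv_atTop_zero.comp Real.tendsto_sqrt_atTop).smul_const x
  have hmeas : ∀ᶠ ρ : ℝ in atTop,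
      AEStronglyMeasurable (fun x ↦ cexp (I * ρ * S ((√ρ)⁻¹ • x)) * a ((√ρ)⁻¹ • x)) :=
    Eventually.of_forall fun ρ ↦ by fun_prop
  have hdom : ∀ᶠ ρ : ℝ in atTop, ∀ᵐ x, ‖cexp (I * ρ * S ((√ρ)⁻¹ • x)) * a ((√ρ)⁻¹ • x)‖ ≤
      M * Real.exp (-c * ‖x‖ ^ 2) := by
    filter_upwards [eventually_gt_atTop 0] with ρ hρ
    refine Eventually.of_forall fun x ↦ ?_
    rw [norm_mul, mul_comm M]
    exact mul_le_mul (norm_cexp_I_mul_comp_inv_sqrt_smul_le him hρ x) (hM _) (norm_nonneg _)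
      (Real.exp_nonneg _)
  have hlim : ∀ᵐ x, Tendsto (fun ρ : ℝ ↦ cexp (I * ρ * S ((√ρ)⁻¹ • x)) * a ((√ρ)⁻¹ • x))
      atTop (𝓝 0) := by
    refine Eventually.of_forall fun x ↦ ?_
    have ha_lim : Tendsto (fun ρ : ℝ ↦ a ((√ρ)⁻¹ • x)) atTop (𝓝 0) := by
      rw [← ha0]
      exact (ha.tendsto 0).comp (hshrink x)
    refine squeeze_zero_norm' ?_ (by simpa using ha_lim.norm)
    filter_upwards [eventually_ge_atTop 0] with ρ hρ
    rw [norm_mul]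
    exact mul_le_of_le_one_left (norm_nonneg _)
      (norm_cexp_I_mul_ofReal_mul_le_one hρ (le_trans (by positivity) (him _)))
  simpa using tendsto_integral_filter_of_dominated_convergence _ hmeas hdom
    ((integrable_exp_neg_mul_norm_sq hc).const_mul M) hlim

theorem stmt12_general (n : ℕ) (c : ℝ) (hc : 0 < c)
    (S : EuclideanSpace ℝ (Fin n) → ℂ) (hS : Continuous S)
    (him : ∀ y, c * ‖y‖ ^ 2 ≤ (S y).im)
    (a : EuclideanSpace ℝ (Fin n) → ℂ) (ha : Continuous a) (hsupp : HasCompactSupport a)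
    (ha0 : a 0 = 0) :
    Filter.Tendsto (fun ρ : ℝ =>
      ((ρ ^ ((n : ℝ) / 2) : ℝ) : ℂ) * ∫ y, Complex.exp (Complex.I * ρ * S y) * a y)
      Filter.atTop (nhds 0) := by
  obtain ⟨M, hM⟩ := hsupp.exists_bound_of_continuous ha
  refine (tendsto_integral_cexp_mul_comp_inv_sqrt_smul hc hS him ha hM ha0).congr' ?_
  filter_upwards [eventually_gt_atTop 0] with ρ hρ
  rw [integral_comp_inv_sqrt_smul hρ (fun y ↦ cexp (I * ρ * S y) * a y),
    finrank_euclideanSpace_fin]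

/-- if Im S ≥ c|y|² and the continuous compactly supported amplitude a
vanishes (linearly) at 0, then ρ^{n/2} ∫ e^{iρS} a dy → 0 as ρ → ∞. -/
theorem stmt12 (n : ℕ) (hn : 1 ≤ n) (c : ℝ) (hc : 0 < c)
    (S : EuclideanSpace ℝ (Fin n) → ℂ) (hS : Continuous S)
    (him : ∀ y, c * ‖y‖ ^ 2 ≤ (S y).im)
    (a : EuclideanSpace ℝ (Fin n) → ℂ) (ha : Continuous a) (hsupp : HasCompactSupport a)
    (ha0 : a 0 = 0) (L δ : ℝ) (hδ : 0 < δ)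
    (hlin : ∀ y : EuclideanSpace ℝ (Fin n), ‖y‖ ≤ δ → ‖a y‖ ≤ L * ‖y‖) :
    Filter.Tendsto (fun ρ : ℝ =>
      ((ρ ^ ((n : ℝ) / 2) : ℝ) : ℂ) * ∫ y, Complex.exp (Complex.I * ρ * S y) * a y)
      Filter.atTop (nhds 0) :=
  stmt12_general n c hc S hS him a ha hsupp ha0
end
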